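/- Let F be a homogeneous polynomial of even degree g on ℝ^n with |∇F(x)|² = g²|x|^{2g-2} for all x. Then |∇(|x|^g ± F(x))|² = 2g²|x|^{g-2}(|x|^g ± F(x)); in particular |x|^{g-2}(|x|^g ± F(x)) is a sum of squares of polynomials. -/

import Mathlib

/-!
Write `Q = ∑ xᵢ²` and `ε = ±1`. Then `∇Q^m = 2m Q^{m-1} x`, so expanding `|∇(Q^m + εF)|²`
gives `(2m)² Q^{2m-1} + 2ε (2m) Q^{m-1} ⟨x, ∇F⟩ + |∇F|²`. Euler's identity turns the cross
term into `2ε (2m)² Q^{m-1} F`, and the Cartan–Münzner equation makes the last term equal to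
the first; everything collects to `2(2m)² Q^{m-1}(Q^m + εF)`. Dividing by `2(2m)² > 0` writes
`Q^{m-1}(Q^m + εF)` as the sum of the squares of the rescaled partial derivatives.
-/

open MvPolynomial

namespace MvPolynomial

variable {σ R : Type*} [Fintype σ] [CommRing R]

theorem pderiv_sum_X_sq (i : σ) : pderiv i (∑ j, X j ^ 2 : MvPolynomial σ R) = 2 * X i := by
  classical
  simp [pderiv_X, Pi.single_apply, mul_comm]

theorem pderiv_sum_X_sq_pow (m : ℕ) (i : σ) :
    pderiv i ((∑ j, X j ^ 2) ^ m : MvPolynomial σ R)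
      = 2 * (m : MvPolynomial σ R) * (∑ j, X j ^ 2) ^ (m - 1) * X i := by
  rw [pderiv_pow, pderiv_sum_X_sq]
  ring

theorem sum_pderiv_sum_X_sq_pow_sq (m : ℕ) :
    ∑ i, pderiv i ((∑ j, X j ^ 2) ^ m : MvPolynomial σ R) ^ 2
      = C ((2 * (m : R)) ^ 2) * (∑ j, X j ^ 2) ^ (2 * m - 1) := by
  rcases m with _ | k
  · simp
  simp only [pderiv_sum_X_sq_pow, mul_pow, ← Finset.mul_sum]
  rw [Nat.add_sub_cancel, show 2 * (k + 1) - 1 = k * 2 + 1 by omega]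
  simp only [map_pow, map_mul, map_ofNat, map_natCast]
  ring

theorem sum_pderiv_sum_X_sq_pow_mul_pderiv (m : ℕ) {d : ℕ} {F : MvPolynomial σ R}
    (hF : F.IsHomogeneous d) :
    ∑ i, pderiv i ((∑ j, X j ^ 2) ^ m) * pderiv i F
      = 2 * (m : MvPolynomial σ R) * (d : MvPolynomial σ R) * (∑ j, X j ^ 2) ^ (m - 1) * F := by
  simp only [pderiv_sum_X_sq_pow, mul_assoc, ← Finset.mul_sum, hF.sum_X_mul_pderiv, nsmul_eq_mul]
  ring

theorem sum_pderiv_sq_sum_X_sq_pow_add_C_mul {m : ℕ} {F : MvPolynomial σ R}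
    (hF : F.IsHomogeneous (2 * m))
    (hCM : ∑ i, (pderiv i F) ^ 2 = C ((2 * (m : R)) ^ 2) * (∑ i, X i ^ 2) ^ (2 * m - 1))
    {ε : R} (hε : ε ^ 2 = 1) :
    ∑ i, (pderiv i ((∑ i, X i ^ 2) ^ m + C ε * F)) ^ 2
      = C (2 * (2 * (m : R)) ^ 2) * (∑ i, X i ^ 2) ^ (m - 1) * ((∑ i, X i ^ 2) ^ m + C ε * F) := by
  have hexpand : ∑ i, (pderiv i ((∑ i, X i ^ 2) ^ m + C ε * F)) ^ 2
      = ∑ i, pderiv i ((∑ j, X j ^ 2) ^ m : MvPolynomial σ R) ^ 2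
        + 2 * C ε * ∑ i, pderiv i ((∑ j, X j ^ 2) ^ m) * pderiv i F
        + C (ε ^ 2) * ∑ i, (pderiv i F) ^ 2 := by
    simp only [map_add, pderiv_C_mul, Finset.mul_sum, ← Finset.sum_add_distrib, map_pow]
    exact Finset.sum_congr rfl fun i _ => by ring
  rw [hexpand, sum_pderiv_sum_X_sq_pow_sq, sum_pderiv_sum_X_sq_pow_mul_pderiv m hF, hCM, hε]
  rcases m with _ | k
  · simp
  rw [show 2 * (k + 1) - 1 = (k + 1 - 1) + (k + 1) by omega, pow_add]
  simp only [map_pow, map_mul, map_ofNat, map_natCast, map_one]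
  push_cast
  ring

end MvPolynomial

theorem MvPolynomial.eq_sum_sq_of_C_mul_eq_sum_sq {σ ι : Type*} [Fintype ι] {c : ℝ} (hc : 0 < c)
    {p : MvPolynomial σ ℝ} {f : ι → MvPolynomial σ ℝ} (h : C c * p = ∑ i, f i ^ 2) :
    p = ∑ i, (C (√c)⁻¹ * f i) ^ 2 := by
  simp only [mul_pow, ← map_pow, inv_pow, Real.sq_sqrt hc.le, ← Finset.mul_sum, ← h, ← mul_assoc,
    ← map_mul, inv_mul_cancel₀ hc.ne', map_one, one_mul]

theorem stmt1 (n m : ℕ) (hm : 1 ≤ m) (F : MvPolynomial (Fin n) ℝ)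
    (hF : F.IsHomogeneous (2 * m))
    (hCM : ∑ i, (pderiv i F) ^ 2
        = C ((2 * (m : ℝ)) ^ 2) * (∑ i, X i ^ 2) ^ (2 * m - 1)) :
    ∀ ε : ℝ, (ε = 1 ∨ ε = -1) →
      (∑ i, (pderiv i ((∑ i, X i ^ 2) ^ m + C ε * F)) ^ 2
          = C (2 * (2 * (m : ℝ)) ^ 2) * (∑ i, X i ^ 2) ^ (m - 1)
              * ((∑ i, X i ^ 2) ^ m + C ε * F))
      ∧ ∃ (N : ℕ) (h : Fin N → MvPolynomial (Fin n) ℝ),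
          (∑ i, X i ^ 2) ^ (m - 1) * ((∑ i, X i ^ 2) ^ m + C ε * F)
            = ∑ j, (h j) ^ 2 := by
  intro ε hε
  have hε_sq : ε ^ 2 = 1 := by rcases hε with rfl | rfl <;> norm_num
  have hgrad := sum_pderiv_sq_sum_X_sq_pow_add_C_mul hF hCM hε_sq
  have hc : (0 : ℝ) < 2 * (2 * m) ^ 2 := by positivity
  exact ⟨hgrad, n, _, eq_sum_sq_of_C_mul_eq_sum_sq hc ((mul_assoc _ _ _).symm.trans hgrad.symm)⟩
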